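/- Let L be a finite meet-distributive meet-semilattice. For α ∈ L and t ∈ ℓ(α), one has t ∈ S(α) if and only if there exists a lower neighbor β of α with ℓ(β) = ℓ(α) \ {t}. Moreover, every element of S(α) is a maximal element of ℓ(α). -/

import Mathlib

open scoped Classical

/-- An element of a poset is *join-irreducible* if it covers exactly one element. -/
def JoinIrred {L : Type*} [Preorder L] (a : L) : Prop := ∃! b : L, b ⋖ a

/-- `ell α = {p ∈ P : p ≤ α}`, the set of join-irreducible elements below `α`. -/
def ell {L : Type*} [Preorder L] (a : L) : Set L := {p | JoinIrred p ∧ p ≤ a}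

/-- The set of join-irreducible elements. -/
def Pset (L : Type*) [Preorder L] : Set L := {p | JoinIrred p}

/-- The set `N(α)` of lower neighbors of `α`, as a finset. -/
noncomputable def NF {L : Type*} [Preorder L] [Fintype L] (a : L) : Finset L :=
  Finset.univ.filter (fun b => b ⋖ a)

/-- `ell` as a finset. -/
noncomputable def ellF {L : Type*} [Preorder L] [Fintype L] (a : L) : Finset L :=
  Finset.univ.filter (fun p => JoinIrred p ∧ p ≤ a)

/-- `α' = ⋀ N(α)`, the meet of all lower neighbors of `α` (with `α' = α` if `N(α) = ∅`). -/
noncomputable def lowMeet {L : Type*} [SemilatticeInf L] [Fintype L] (a : L) : L :=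
  if h : (NF a).Nonempty then (NF a).inf' h id else a

/-- `S(α) = ℓ(α) \ ℓ(α')`. -/
noncomputable def SF {L : Type*} [SemilatticeInf L] [Fintype L] (a : L) : Finset L :=
  ellF a \ ellF (lowMeet a)

/-- An interval `[γ, β]` is Boolean if it is order-isomorphic to some `2^[k]`. -/
def IsBooleanInterval {L : Type*} [Preorder L] (γ β : L) : Prop :=
  ∃ k : ℕ, Nonempty ((Set.Icc γ β) ≃o Set (Fin k))

/-- A poset is meet-distributive if each interval `[γ, β]` such that `γ` is the meet of
the lower neighbors of `β` in `[γ, β]` is Boolean. -/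
def MeetDistributive (L : Type*) [Preorder L] : Prop :=
  ∀ γ β : L, γ ≤ β → IsGLB {x | γ ≤ x ∧ x ⋖ β} γ → IsBooleanInterval γ β

/-- A pair `(A, B)` of subsets of `P` is independent if each `α` with `B ⊆ ℓ(α)`
satisfies `A ∩ ℓ(α) ≠ ∅`. -/
def Indep {L : Type*} [Preorder L] (A B : Set L) : Prop :=
  ∀ α : L, B ⊆ ell α → (A ∩ ell α).Nonempty

/-- `⟨B⟩`, the poset ideal of `P` generated by `B ⊆ P`. -/
def idealGen {L : Type*} [Preorder L] (B : Set L) : Set L :=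
  {p | JoinIrred p ∧ ∃ q ∈ B, p ≤ q}

/-- `M(B)`, the set of maximal elements of `B`. -/
def maxElems {L : Type*} [Preorder L] (B : Set L) : Set L :=
  {b ∈ B | ∀ c ∈ B, b ≤ c → c = b}

/-!
In a Boolean interval `[α', α]` the lower covers of `α` are coatoms, so any two of them meet in
a lower cover of each, and distinct covers `β₁ ≠ β₂` have distinct meets with any third cover.
By induction on `α` this gives: a join-irreducible `t ≤ α` lies outside at most one lower cover
of `α` (pick a cover `β₃ ≥ t` and compare `β₁ ⊓ β₃`, `β₂ ⊓ β₃` below `β₃`); and hence two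
join-irreducibles `p, q ≤ α` outside a cover `β` are equal (both lie below a cover `γ ≥ p`, and
outside its cover `β ⊓ γ`). Finally `t ∈ S(α)` exactly when `t` lies outside some lower cover.
-/

open Finset

theorem IsCoatom.inf_covBy {B : Type*} [Lattice B] [IsLowerModularLattice B] [OrderTop B]
    {c₁ c₂ : B} (h₁ : IsCoatom c₁) (h₂ : IsCoatom c₂) (hne : c₁ ≠ c₂) : c₁ ⊓ c₂ ⋖ c₂ :=
  inf_covBy_of_covBy_sup_left <| by rw [h₁.sup_eq_top_of_ne h₂ hne]; exact h₁.covBy_top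

theorem IsCoatom.eq_of_inf_eq_inf {B : Type*} [DistribLattice B] [OrderTop B] {c₁ c₂ c₃ : B}
    (h₁ : IsCoatom c₁) (h₂ : IsCoatom c₂) (h₃ : IsCoatom c₃) (hne : c₂ ≠ c₃)
    (h : c₁ ⊓ c₃ = c₂ ⊓ c₃) : c₁ = c₂ := by
  refine ((h₁.le_iff_eq h₂.1).1 ?_).symm
  calc c₁ = c₁ ⊓ (c₂ ⊔ c₃) := by rw [h₂.sup_eq_top_of_ne h₃ hne, inf_top_eq]
    _ = c₁ ⊓ c₂ ⊔ c₂ ⊓ c₃ := by rw [inf_sup_left, h]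
    _ ≤ c₂ := sup_le inf_le_right inf_le_left

theorem Set.Icc.coe_covBy_coe {α : Type*} [PartialOrder α] {a b : α} {x y : Set.Icc a b} :
    (x : α) ⋖ y ↔ x ⋖ y :=
  Set.OrdConnected.apply_covBy_apply_iff (OrderEmbedding.subtype (· ∈ Set.Icc a b))
    (by rw [OrderEmbedding.coe_subtype, Subtype.range_coe]; exact Set.ordConnected_Icc)

theorem OrderIso.isCoatom_apply_of_covBy {α B : Type*} [PartialOrder α] [PartialOrder B]
    [OrderTop B] {γ a c : α} (e : Set.Icc γ a ≃o B) (hγ : γ ≤ c) (hc : c ⋖ a) :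
    IsCoatom (e ⟨c, hγ, hc.le⟩) := by
  let top : Set.Icc γ a := ⟨a, hγ.trans hc.le, le_rfl⟩
  have hcov : e ⟨c, hγ, hc.le⟩ ⋖ e top := (apply_covBy_apply_iff e).2 (Set.Icc.coe_covBy_coe.1 hc)
  have htop : e top = ⊤ := top_le_iff.1 (e.symm_apply_le.1 (e.symm ⊤).2.2)
  rwa [htop, covBy_top_iff] at hcov

section

variable {L : Type*} [SemilatticeInf L] [Fintype L]

@[simp]
theorem mem_NF {a b : L} : b ∈ NF a ↔ b ⋖ a := by simp [NF]

@[simp]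
theorem mem_ellF {a p : L} : p ∈ ellF a ↔ JoinIrred p ∧ p ≤ a := by simp [ellF]

theorem lowMeet_le_self (a : L) : lowMeet a ≤ a := by
  unfold lowMeet
  split_ifs with hne
  · obtain ⟨b, hb⟩ := hne
    exact (inf'_le id hb).trans (mem_NF.1 hb).le
  · exact le_rfl

theorem le_lowMeet_iff {t a : L} (hta : t ≤ a) : t ≤ lowMeet a ↔ ∀ b, b ⋖ a → t ≤ b := by
  unfold lowMeet
  split_ifs with hne
  · simp [le_inf'_iff]
  · simp only [not_nonempty_iff_eq_empty, eq_empty_iff_forall_notMem, mem_NF] at hne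
    simp [hta, hne]

theorem lowMeet_le {a b : L} (hb : b ⋖ a) : lowMeet a ≤ b :=
  (le_lowMeet_iff (lowMeet_le_self a)).1 le_rfl b hb

theorem isGLB_lowMeet {a b : L} (hb : b ⋖ a) : IsGLB {x | lowMeet a ≤ x ∧ x ⋖ a} (lowMeet a) :=
  ⟨fun _ hx ↦ hx.1, fun _ hy ↦ (le_lowMeet_iff ((hy ⟨lowMeet_le hb, hb⟩).trans hb.le)).2
    fun _ hc ↦ hy ⟨lowMeet_le hc, hc⟩⟩

namespace MeetDistributive

theorem isBooleanInterval_lowMeet (h : MeetDistributive L) {a b : L} (hb : b ⋖ a) :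
    IsBooleanInterval (lowMeet a) a :=
  h _ _ (lowMeet_le_self a) (isGLB_lowMeet hb)

theorem inf_covBy (h : MeetDistributive L) {a b₁ b₂ : L} (h₁ : b₁ ⋖ a) (h₂ : b₂ ⋖ a)
    (hne : b₁ ≠ b₂) : b₁ ⊓ b₂ ⋖ b₂ := by
  obtain ⟨k, ⟨e⟩⟩ := h.isBooleanInterval_lowMeet h₁
  let x₁ : Set.Icc (lowMeet a) a := ⟨b₁, lowMeet_le h₁, h₁.le⟩
  let x₂ : Set.Icc (lowMeet a) a := ⟨b₂, lowMeet_le h₂, h₂.le⟩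
  have hcov : e (x₁ ⊓ x₂) ⋖ e x₂ := by
    rw [e.map_inf]
    exact (e.isCoatom_apply_of_covBy (lowMeet_le h₁) h₁).inf_covBy
      (e.isCoatom_apply_of_covBy (lowMeet_le h₂) h₂)
      (e.injective.ne fun hx ↦ hne (congrArg Subtype.val hx))
  exact Set.Icc.coe_covBy_coe.2 ((apply_covBy_apply_iff e).1 hcov)

theorem eq_of_inf_eq_inf (h : MeetDistributive L) {a b₁ b₂ b₃ : L} (h₁ : b₁ ⋖ a)
    (h₂ : b₂ ⋖ a) (h₃ : b₃ ⋖ a) (hne : b₂ ≠ b₃) (heq : b₁ ⊓ b₃ = b₂ ⊓ b₃) : b₁ = b₂ := by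
  obtain ⟨k, ⟨e⟩⟩ := h.isBooleanInterval_lowMeet h₁
  let x₁ : Set.Icc (lowMeet a) a := ⟨b₁, lowMeet_le h₁, h₁.le⟩
  let x₂ : Set.Icc (lowMeet a) a := ⟨b₂, lowMeet_le h₂, h₂.le⟩
  let x₃ : Set.Icc (lowMeet a) a := ⟨b₃, lowMeet_le h₃, h₃.le⟩
  have he : e x₁ ⊓ e x₃ = e x₂ ⊓ e x₃ := by
    rw [← e.map_inf, ← e.map_inf]
    exact congrArg e (Subtype.ext heq)
  have hx : e x₁ = e x₂ :=
    (e.isCoatom_apply_of_covBy (lowMeet_le h₁) h₁).eq_of_inf_eq_inf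
      (e.isCoatom_apply_of_covBy (lowMeet_le h₂) h₂) (e.isCoatom_apply_of_covBy (lowMeet_le h₃) h₃)
      (e.injective.ne fun hx ↦ hne (congrArg Subtype.val hx)) he
  exact congrArg Subtype.val (e.injective hx)

theorem covBy_eq_of_not_le (h : MeetDistributive L) {t a b₁ b₂ : L} (ht : JoinIrred t)
    (hta : t ≤ a) (h₁ : b₁ ⋖ a) (h₂ : b₂ ⋖ a) (ht₁ : ¬t ≤ b₁) (ht₂ : ¬t ≤ b₂) : b₁ = b₂ := by
  induction a using WellFoundedLT.induction generalizing b₁ b₂ with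
  | ind a ih =>
  obtain rfl | hlt := hta.eq_or_lt
  · exact ht.unique h₁ h₂
  obtain ⟨b₃, htb₃, h₃⟩ := exists_le_covBy_of_lt hlt
  have hne₁ : b₁ ≠ b₃ := by rintro rfl; exact ht₁ htb₃
  have hne₂ : b₂ ≠ b₃ := by rintro rfl; exact ht₂ htb₃
  have hinf : b₁ ⊓ b₃ = b₂ ⊓ b₃ :=
    ih b₃ h₃.lt htb₃ (h.inf_covBy h₁ h₃ hne₁) (h.inf_covBy h₂ h₃ hne₂)
      (fun ht₁₃ ↦ ht₁ (ht₁₃.trans inf_le_left)) (fun ht₂₃ ↦ ht₂ (ht₂₃.trans inf_le_left))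
  exact h.eq_of_inf_eq_inf h₁ h₂ h₃ hne₂ hinf

theorem joinIrred_eq_of_not_le (h : MeetDistributive L) {a b p q : L} (hb : b ⋖ a)
    (hp : JoinIrred p) (hpa : p ≤ a) (hq : JoinIrred q) (hqa : q ≤ a) (hpb : ¬p ≤ b)
    (hqb : ¬q ≤ b) : p = q := by
  induction a using WellFoundedLT.induction generalizing b with
  | ind a ih =>
  obtain rfl | hlt := hpa.eq_or_lt
  · by_contra hne
    obtain ⟨c, hqc, hc⟩ := exists_le_covBy_of_lt (hqa.lt_of_ne (Ne.symm hne))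
    exact hqb (hp.unique hc hb ▸ hqc)
  obtain ⟨c, hpc, hc⟩ := exists_le_covBy_of_lt hlt
  have hcb : c ≠ b := by rintro rfl; exact hpb hpc
  have hqc : q ≤ c := by
    by_contra hqc
    exact hcb (h.covBy_eq_of_not_le hq hqa hc hb hqc hqb)
  exact ih c hc.lt (h.inf_covBy hb hc hcb.symm) hpc hqc
    (fun hpb' ↦ hpb (hpb'.trans inf_le_left)) (fun hqb' ↦ hqb (hqb'.trans inf_le_left))

theorem ellF_eq_sdiff_singleton (h : MeetDistributive L) {a b t : L} (hb : b ⋖ a)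
    (ht : t ∈ ellF a) (htb : ¬t ≤ b) : ellF b = ellF a \ {t} := by
  rw [mem_ellF] at ht
  ext p
  simp only [mem_sdiff, mem_singleton, mem_ellF]
  constructor
  · rintro ⟨hp, hpb⟩
    exact ⟨⟨hp, hpb.trans hb.le⟩, by rintro rfl; exact htb hpb⟩
  · rintro ⟨⟨hp, hpa⟩, hpt⟩
    exact ⟨hp, by_contra fun hpb ↦ hpt (h.joinIrred_eq_of_not_le hb hp hpa ht.1 ht.2 hpb htb)⟩

end MeetDistributive

theorem mem_SF_iff {a t : L} : t ∈ SF a ↔ JoinIrred t ∧ t ≤ a ∧ ∃ b, b ⋖ a ∧ ¬t ≤ b := by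
  simp only [SF, mem_sdiff, mem_ellF]
  constructor
  · rintro ⟨⟨ht, hta⟩, htS⟩
    exact ⟨ht, hta, by simpa [ht, le_lowMeet_iff hta] using htS⟩
  · rintro ⟨ht, hta, b, hb, htb⟩
    exact ⟨⟨ht, hta⟩, fun ⟨_, htm⟩ ↦ htb (htm.trans (lowMeet_le hb))⟩

end

/-- `t ∈ S(α)` iff some lower neighbor `β` of `α` has
`ℓ(β) = ℓ(α) \ {t}`; moreover every element of `S(α)` is maximal in `ℓ(α)`. -/
theorem mem_S_iff {L : Type*} [SemilatticeInf L] [Fintype L]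
    (h : MeetDistributive L) (α : L) :
    (∀ t ∈ ellF α, (t ∈ SF α ↔ ∃ β : L, β ⋖ α ∧ ellF β = ellF α \ {t})) ∧
    (∀ t ∈ SF α, ∀ u ∈ ellF α, t ≤ u → u = t) := by
  refine ⟨fun t ht ↦ ⟨fun htS ↦ ?_, fun ⟨β, hβ, hell⟩ ↦ ?_⟩, fun t htS u hu htu ↦ ?_⟩
  · obtain ⟨-, -, β, hβ, htβ⟩ := mem_SF_iff.1 htS
    exact ⟨β, hβ, h.ellF_eq_sdiff_singleton hβ ht htβ⟩
  · have htβ : t ∉ ellF β := by simp [hell]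
    rw [mem_ellF] at ht
    exact mem_SF_iff.2 ⟨ht.1, ht.2, β, hβ, fun hle ↦ htβ (mem_ellF.2 ⟨ht.1, hle⟩)⟩
  · obtain ⟨ht, -, β, hβ, htβ⟩ := mem_SF_iff.1 htS
    rw [mem_ellF] at hu
    exact h.joinIrred_eq_of_not_le hβ hu.1 hu.2 ht (htu.trans hu.2)
      (fun huβ ↦ htβ (htu.trans huβ)) htβ
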